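/- There exist constants c, C > 0 depending only on d such that the following holds. Let μ be a translation-invariant probability measure on configurations on ℤ^{d+1}. For every integer r ≥ 2, μ(rad_0(M_0) ≥ r) ≤ c·r^d·μ(rad_0(H_0) ≥ r/2) + C·∑_{s ≥ r/2, s ∈ ℕ} s^d·μ(rad_0(H_0) ≥ s), where 0 denotes the origin of 𝕃. -/

import Mathlib

open MeasureTheory
open scoped ENNReal

noncomputable section

/-- A site of `ℤ^{d+1}`: a base in `ℤ^d` and a height in `ℤ`. -/
abbrev Site (d : ℕ) := (Fin d → ℤ) × ℤ

/-- `Sign(x)`: `{1}` if `x > 0`, `{-1}` if `x < 0`, `{-1, 1}` if `x = 0`. -/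
def signSet (x : ℤ) : Set ℤ := if 0 < x then {1} else if x < 0 then {-1} else {-1, 1}

/-- `ℓ¹`-distance between two bases. -/
def l1 {d : ℕ} (b b' : Fin d → ℤ) : ℤ := ∑ j, |b j - b' j|

/-- `ℓ¹`-distance between two sites. -/
def dist1 {d : ℕ} (u v : Site d) : ℤ := l1 u.1 v.1 + |u.2 - v.2|

/-- A single move of a d-path: either a vertical move into a closed site,
or a diagonal move towards the zero-height hyperplane. -/
def DStep {d : ℕ} (ω : Site d → Bool) (p q : Site d) : Prop :=
  (q.1 = p.1 ∧ (q.2 - p.2) ∈ signSet p.2 ∧ ω q = true) ∨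
  (l1 q.1 p.1 = 1 ∧ (p.2 - q.2) ∈ signSet p.2 ∧ p.2 ≠ 0)

/-- There is a d-path from `u` (a closed site of the zero-height hyperplane) to `v`. -/
def IsDPath {d : ℕ} (ω : Site d → Bool) (u v : Site d) : Prop :=
  u.2 = 0 ∧ ω u = true ∧
  ∃ (k : ℕ) (p : Fin (k + 1) → Site d), Function.Injective p ∧
    p 0 = u ∧ p (Fin.last k) = v ∧
    ∀ i : Fin k, DStep ω (p i.castSucc) (p i.succ)

/-- `hat v`: sites with the same base as `v` but further from the zero-height hyperplane. -/
def hatSet {d : ℕ} (v : Site d) : Set (Site d) :=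
  {w | w.1 = v.1 ∧ 0 ≤ v.2 * w.2 ∧ |v.2| ≤ |w.2|}

/-- `u ↣ v`: there is a d-path from `u` to some site of `hat v`. -/
def reaches {d : ℕ} (ω : Site d → Bool) (u v : Site d) : Prop :=
  ∃ w ∈ hatSet v, IsDPath ω u w

/-- The hill around `u`. -/
def hill {d : ℕ} (ω : Site d → Bool) (u : Site d) : Set (Site d) := {v | reaches ω u v}

/-- The mountain around `v`: the union of all hills (around sites of the zero-height
hyperplane) containing `v`. -/
def mountain {d : ℕ} (ω : Site d → Bool) (v : Site d) : Set (Site d) :=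
  {w | ∃ u : Site d, u.2 = 0 ∧ v ∈ hill ω u ∧ w ∈ hill ω u}

/-- Positive depth `l_u^+(S)`. -/
def depthPlus {d : ℕ} (u : Site d) (S : Set (Site d)) : ℕ∞ :=
  ⨆ k ∈ {k : ℕ | ((u.1, u.2 + (k : ℤ)) : Site d) ∈ S}, (k : ℕ∞)

/-- Negative depth `l_u^-(S)`. -/
def depthMinus {d : ℕ} (u : Site d) (S : Set (Site d)) : ℕ∞ :=
  ⨆ k ∈ {k : ℕ | ((u.1, u.2 - (k : ℤ)) : Site d) ∈ S}, (k : ℕ∞)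

/-- Radius `rad_u(S) = sup {‖v - u‖₁ : v ∈ S}`, valued in `ℝ≥0∞`. -/
def radius {d : ℕ} (u : Site d) (S : Set (Site d)) : ℝ≥0∞ :=
  ⨆ v ∈ S, ((dist1 u v).toNat : ℝ≥0∞)

open Classical in
/-- `F₊(b) = 1 + l_{(b,0)}^+(M_{(b,0)})` if the mountain is nonempty, `0` otherwise. -/
def Fplus {d : ℕ} (ω : Site d → Bool) (b : Fin d → ℤ) : ℤ :=
  if (mountain ω (b, 0)).Nonempty then
    1 + ((depthPlus ((b, 0) : Site d) (mountain ω (b, 0))).toNat : ℤ)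
  else 0

open Classical in
/-- `F₋(b) = -1 - l_{(b,0)}^-(M_{(b,0)})` if the mountain is nonempty, `0` otherwise. -/
def Fminus {d : ℕ} (ω : Site d → Bool) (b : Fin d → ℤ) : ℤ :=
  if (mountain ω (b, 0)).Nonempty then
    -1 - ((depthMinus ((b, 0) : Site d) (mountain ω (b, 0))).toNat : ℤ)
  else 0

/-- Shift of a configuration by a site `s`. -/
def shift {d : ℕ} (s : Site d) (ω : Site d → Bool) : Site d → Bool := fun v => ω (v + s)

/-- The origin of the zero-height hyperplane. -/
def origin (d : ℕ) : Site d := (0, 0)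


section Lemmas
variable {d : ℕ}

lemma l1_nonneg (b b' : Fin d → ℤ) : 0 ≤ l1 b b' :=
  Finset.sum_nonneg fun j _ => abs_nonneg _

lemma dist1_nonneg (u v : Site d) : 0 ≤ dist1 u v :=
  add_nonneg (l1_nonneg _ _) (abs_nonneg _)

lemma l1_comm (b b' : Fin d → ℤ) : l1 b b' = l1 b' b := by
  unfold l1; exact Finset.sum_congr rfl fun j _ => abs_sub_comm _ _

lemma dist1_comm (u v : Site d) : dist1 u v = dist1 v u := by
  unfold dist1; rw [l1_comm, abs_sub_comm]

lemma l1_triangle (a b c : Fin d → ℤ) : l1 a c ≤ l1 a b + l1 b c := by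
  unfold l1; rw [← Finset.sum_add_distrib]
  exact Finset.sum_le_sum fun j _ => abs_sub_le _ _ _

lemma dist1_triangle (u v w : Site d) : dist1 u w ≤ dist1 u v + dist1 v w := by
  unfold dist1
  have := l1_triangle u.1 v.1 w.1
  have := abs_sub_le u.2 v.2 w.2
  omega

lemma l1_add_right (b b' s : Fin d → ℤ) : l1 (b + s) (b' + s) = l1 b b' := by
  unfold l1; exact Finset.sum_congr rfl fun j _ => by congr 1; simp [Pi.add_apply]

lemma dist1_add_right (u v s : Site d) : dist1 (u + s) (v + s) = dist1 u v := by
  unfold dist1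
  rw [Prod.fst_add, Prod.fst_add, Prod.snd_add, Prod.snd_add, l1_add_right]
  congr 1
  ring_nf

end Lemmas
section Meas
variable {d : ℕ}

lemma measurable_shift (s : Site d) : Measurable (shift s) :=
  measurable_pi_lambda _ fun v => measurable_pi_apply (v + s)

lemma measurableSet_eval (q : Site d) : MeasurableSet {ω : Site d → Bool | ω q = true} := by
  have : {ω : Site d → Bool | ω q = true} = (fun ω : Site d → Bool => ω q) ⁻¹' {true} := by
    ext ω; simp
  rw [this]
  exact measurable_pi_apply q (MeasurableSet.singleton true)

lemma measurableSet_dstep (p q : Site d) :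
    MeasurableSet {ω : Site d → Bool | DStep ω p q} := by
  have : {ω : Site d → Bool | DStep ω p q} =
      ({ω | q.1 = p.1 ∧ (q.2 - p.2) ∈ signSet p.2} ∩ {ω | ω q = true}) ∪
      {ω | l1 q.1 p.1 = 1 ∧ (p.2 - q.2) ∈ signSet p.2 ∧ p.2 ≠ 0} := by
    ext ω; simp [DStep, Set.mem_setOf_eq, and_assoc]
  rw [this]
  exact ((MeasurableSet.const _).inter (measurableSet_eval q)).union (MeasurableSet.const _)

lemma measurableSet_isDPath (u w : Site d) :
    MeasurableSet {ω : Site d → Bool | IsDPath ω u w} := by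
  have : {ω : Site d → Bool | IsDPath ω u w} =
      ({ω | u.2 = 0} ∩ {ω | ω u = true}) ∩
      ⋃ (k : ℕ), ⋃ (p : Fin (k + 1) → Site d),
        ({ω : Site d → Bool | Function.Injective p ∧ p 0 = u ∧ p (Fin.last k) = w} ∩
          ⋂ (i : Fin k), {ω | DStep ω (p i.castSucc) (p i.succ)}) := by
    ext ω
    simp only [IsDPath, Set.mem_setOf_eq, Set.mem_inter_iff, Set.mem_iUnion, Set.mem_iInter]
    tauto
  rw [this]
  refine ((MeasurableSet.const _).inter (measurableSet_eval u)).inter ?_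
  refine MeasurableSet.iUnion fun k => MeasurableSet.iUnion fun p => ?_
  exact (MeasurableSet.const _).inter (MeasurableSet.iInter fun i => measurableSet_dstep _ _)

lemma measurableSet_hillMem (u v : Site d) :
    MeasurableSet {ω : Site d → Bool | v ∈ hill ω u} := by
  have : {ω : Site d → Bool | v ∈ hill ω u} =
      ⋃ (w : Site d), ⋃ (_ : w ∈ hatSet v), {ω | IsDPath ω u w} := by
    ext ω; simp [hill, reaches, Set.mem_setOf_eq]
  rw [this]
  exact MeasurableSet.iUnion fun w => MeasurableSet.iUnion fun _ => measurableSet_isDPath u w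

lemma measurable_radius_hill (x u : Site d) :
    Measurable fun ω : Site d → Bool => radius x (hill ω u) := by
  have : (fun ω : Site d → Bool => radius x (hill ω u)) =
      fun ω => ⨆ (v : Site d), Set.indicator {ω' : Site d → Bool | v ∈ hill ω' u}
        (fun _ => ((dist1 x v).toNat : ℝ≥0∞)) ω := by
    funext ω
    unfold radius
    congr 1
    funext v
    by_cases h : v ∈ hill ω u <;> simp [h, Set.indicator_of_mem, Set.indicator_of_notMem]
  rw [this]
  exact Measurable.iSup fun v =>
    (measurable_const.indicator (measurableSet_hillMem u v))

lemma measurableSet_Gset (x u : Site d) (t : ℝ≥0∞) :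
    MeasurableSet {ω : Site d → Bool | t ≤ radius x (hill ω u)} :=
  measurable_radius_hill x u measurableSet_Ici

end Meas
section Shift
variable {d : ℕ}

lemma shift_neg_shift (s : Site d) (ω : Site d → Bool) : shift (-s) (shift s ω) = ω := by
  funext v; simp [shift]

lemma snd_add' (p s : Site d) : (p + s).2 = p.2 + s.2 := rfl
lemma fst_add' (p s : Site d) : (p + s).1 = p.1 + s.1 := rfl

lemma dstep_shift {s : Site d} (hs : s.2 = 0) (ω : Site d → Bool) (p q : Site d)
    (h : DStep (shift s ω) p q) : DStep ω (p + s) (q + s) := by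
  rcases h with ⟨h1, h2, h3⟩ | ⟨h1, h2, h3⟩
  · left
    refine ⟨by rw [fst_add', fst_add', h1], ?_, h3⟩
    rwa [snd_add', snd_add', hs, add_zero, add_zero]
  · right
    rw [fst_add', fst_add', snd_add', snd_add', hs, add_zero, add_zero]
    have : l1 (q.1 + s.1) (p.1 + s.1) = l1 q.1 p.1 := l1_add_right _ _ _
    exact ⟨by rw [this, h1], h2, h3⟩

lemma isDPath_shift {s : Site d} (hs : s.2 = 0) (ω : Site d → Bool) (u w : Site d)
    (h : IsDPath (shift s ω) u w) : IsDPath ω (u + s) (w + s) := by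
  obtain ⟨hu2, hcl, k, p, hinj, h0, hl, hstep⟩ := h
  refine ⟨by rw [snd_add', hu2, hs, add_zero], hcl, k, fun i => p i + s, ?_, by simp [h0], by simp [hl], ?_⟩
  · intro i j hij
    exact hinj (by simpa using hij)
  · intro i
    exact dstep_shift hs ω _ _ (hstep i)

lemma isDPath_shift_iff {s : Site d} (hs : s.2 = 0) (ω : Site d → Bool) (u w : Site d) :
    IsDPath (shift s ω) u w ↔ IsDPath ω (u + s) (w + s) := by
  constructor
  · exact isDPath_shift hs ω u w
  · intro h
    have hns : (-s).2 = 0 := by simp [Prod.snd_neg, hs]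
    have := isDPath_shift hns (shift s ω) (u + s) (w + s) (by rwa [shift_neg_shift])
    simpa using this

lemma hatSet_shift {s : Site d} (hs : s.2 = 0) (v w : Site d) :
    w ∈ hatSet v ↔ w + s ∈ hatSet (v + s) := by
  unfold hatSet
  rw [Set.mem_setOf_eq, Set.mem_setOf_eq, snd_add', snd_add', hs, add_zero, add_zero,
    fst_add', fst_add']
  constructor
  · rintro ⟨h1, h2, h3⟩; exact ⟨by rw [h1], h2, h3⟩
  · rintro ⟨h1, h2, h3⟩; exact ⟨add_right_cancel h1, h2, h3⟩

lemma hill_shift {s : Site d} (hs : s.2 = 0) (ω : Site d → Bool) (u v : Site d) :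
    v ∈ hill (shift s ω) u ↔ v + s ∈ hill ω (u + s) := by
  unfold hill reaches
  simp only [Set.mem_setOf_eq]
  constructor
  · rintro ⟨w, hw, hp⟩
    exact ⟨w + s, (hatSet_shift hs v w).mp hw, (isDPath_shift_iff hs ω u w).mp hp⟩
  · rintro ⟨w, hw, hp⟩
    refine ⟨w - s, ?_, ?_⟩
    · have := (hatSet_shift hs v (w - s)).mpr; rw [sub_add_cancel] at this; exact this hw
    · rw [isDPath_shift_iff hs ω u (w - s), sub_add_cancel]; exact hp

lemma radius_hill_shift {s : Site d} (hs : s.2 = 0) (ω : Site d → Bool) (x u : Site d) :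
    radius x (hill (shift s ω) u) = radius (x + s) (hill ω (u + s)) := by
  unfold radius
  apply le_antisymm
  · refine iSup₂_le fun v hv => ?_
    rw [← dist1_add_right x v s]
    exact le_iSup₂ (f := fun v _ => ((dist1 (x+s) v).toNat : ℝ≥0∞)) (v + s)
      ((hill_shift hs ω u v).mp hv)
  · refine iSup₂_le fun w hw => ?_
    have hw' : w - s ∈ hill (shift s ω) u := by
      rw [hill_shift hs ω u (w - s), sub_add_cancel]; exact hw
    have : dist1 (x + s) w = dist1 x (w - s) := by
      rw [← dist1_add_right x (w - s) s, sub_add_cancel]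
    rw [this]
    exact le_iSup₂ (f := fun v _ => ((dist1 x v).toNat : ℝ≥0∞)) (w - s) hw'

end Shift
section Count
variable {d : ℕ}

lemma le_radius_of_mem {u v : Site d} {S : Set (Site d)} (hv : v ∈ S) :
    ((dist1 u v).toNat : ℝ≥0∞) ≤ radius u S :=
  le_iSup₂ (f := fun v _ => ((dist1 u v).toNat : ℝ≥0∞)) v hv

lemma exists_of_radius_ge {u : Site d} {S : Set (Site d)} {r : ℕ} (hr : 1 ≤ r)
    (h : (r : ℝ≥0∞) ≤ radius u S) : ∃ v ∈ S, r ≤ (dist1 u v).toNat := by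
  by_contra hc
  push_neg at hc
  have hb : radius u S ≤ ((r - 1 : ℕ) : ℝ≥0∞) := by
    refine iSup₂_le fun v hv => ?_
    have h1 : (dist1 u v).toNat < r := hc v hv
    exact Nat.cast_le.mpr (by omega)
  have := le_trans h hb
  rw [Nat.cast_le] at this
  omega

/-- the box of radius m -/
def box (d m : ℕ) : Finset (Fin d → ℤ) := Fintype.piFinset fun _ : Fin d => Finset.Icc (-(m:ℤ)) m

lemma card_box (m : ℕ) : (box d m).card = (2*m+1)^d := by
  have h : ∀ _j : Fin d, (Finset.Icc (-(m:ℤ)) m).card = 2*m+1 := by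
    intro j; rw [Int.card_Icc]; omega
  rw [box, Fintype.card_piFinset]
  simp only [Int.card_Icc, Finset.prod_const, Finset.card_univ, Fintype.card_fin]
  congr 1
  omega

lemma mem_box_of_nb {b : Fin d → ℤ} {m : ℕ} (h : ∑ j, (b j).natAbs ≤ m) :
    b ∈ box d m := by
  rw [box, Fintype.mem_piFinset]
  intro j
  rw [Finset.mem_Icc]
  have hj : (b j).natAbs ≤ m :=
    le_trans (Finset.single_le_sum (f := fun j => (b j).natAbs)
      (fun _ _ => Nat.zero_le _) (Finset.mem_univ j)) h
  omega

lemma nb_cast (b : Fin d → ℤ) : ((∑ j, (b j).natAbs : ℕ) : ℤ) = l1 b 0 := by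
  rw [l1]
  push_cast
  exact Finset.sum_congr rfl fun j _ => by simp

end Count
/-- There are constants `c, C > 0`, depending only on `d`, so that for any
translation-invariant probability measure and any integer `r ≥ 2`,
`μ(rad₀(M₀) ≥ r) ≤ c r^d μ(rad₀(H₀) ≥ r/2) + C ∑_{s ≥ r/2} s^d μ(rad₀(H₀) ≥ s)`. -/
theorem mountain_radius_tail_bound (d : ℕ) (hd : 1 ≤ d) :
    ∃ c C : ℝ, 0 < c ∧ 0 < C ∧
      ∀ (μ : Measure (Site d → Bool)), IsProbabilityMeasure μ →
        (∀ s : Site d, μ.map (shift s) = μ) →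
        ∀ r : ℕ, 2 ≤ r →
          μ {ω : Site d → Bool |
              (r : ℝ≥0∞) ≤ radius (origin d) (mountain ω (origin d))} ≤
            ENNReal.ofReal c * (r : ℝ≥0∞) ^ d *
              μ {ω : Site d → Bool |
                  ENNReal.ofReal ((r : ℝ) / 2) ≤ radius (origin d) (hill ω (origin d))} +
            ENNReal.ofReal C * ∑' s : ℕ,
              (if (r : ℝ) / 2 ≤ (s : ℝ) then
                (s : ℝ≥0∞) ^ d *
                  μ {ω : Site d → Bool |
                      (s : ℝ≥0∞) ≤ radius (origin d) (hill ω (origin d))}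
              else 0) := by
  classical
  refine ⟨3^d, 3^d, by positivity, by positivity, ?_⟩
  intro μ hprob hinv r hr
  set O : Site d := origin d with hO
  set G : ℝ≥0∞ → Set (Site d → Bool) := fun t => {ω | t ≤ radius O (hill ω O)} with hGdef
  have hGmeas : ∀ t, MeasurableSet (G t) := fun t => measurableSet_Gset O O t
  have hGmono : ∀ {t t' : ℝ≥0∞}, t ≤ t' → G t' ⊆ G t := fun h ω hω => le_trans h hω
  set nbf : (Fin d → ℤ) → ℕ := fun b => ∑ j, (b j).natAbs with hnbf
  set tb : (Fin d → ℤ) → ℕ := fun b => max (nbf b) (r - nbf b) with htb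
  -- Step A: inclusion
  have hincl : {ω : Site d → Bool | (r : ℝ≥0∞) ≤ radius O (mountain ω O)} ⊆
      ⋃ b : Fin d → ℤ, shift ((b, 0) : Site d) ⁻¹' G ((tb b : ℕ) : ℝ≥0∞) := by
    intro ω hω
    obtain ⟨w, hwS, hwd⟩ := exists_of_radius_ge (by omega) hω
    obtain ⟨u, hu2, h0, hw⟩ := hwS
    have hu : ((u.1, (0:ℤ)) : Site d) = u := by rw [← hu2]
    rw [Set.mem_iUnion]
    refine ⟨u.1, ?_⟩
    rw [Set.mem_preimage]
    show ((tb u.1 : ℕ) : ℝ≥0∞) ≤ radius O (hill (shift ((u.1, 0) : Site d) ω) O)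
    have hs0 : (((u.1, (0:ℤ)) : Site d)).2 = 0 := rfl
    rw [radius_hill_shift hs0]
    have hOu : O + ((u.1, (0:ℤ)) : Site d) = u := by
      rw [← hu]; exact Prod.ext (zero_add _) (zero_add _)
    rw [hOu]
    -- bound the radius from below by both distances
    have h1 : ((nbf u.1 : ℕ) : ℝ≥0∞) ≤ radius u (hill ω u) := by
      have := le_radius_of_mem (u := u) h0
      have he : (dist1 u O).toNat = nbf u.1 := by
        have : dist1 u O = l1 u.1 0 := by
          rw [hO, dist1, origin, hu2]; simp
        rw [this, ← nb_cast u.1, Int.toNat_natCast]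
      rwa [he] at this
    have h2 : ((r - nbf u.1 : ℕ) : ℝ≥0∞) ≤ radius u (hill ω u) := by
      have hmem := le_radius_of_mem (u := u) hw
      refine le_trans (Nat.cast_le.mpr ?_) hmem
      have htri := dist1_triangle O u w
      have hOu' : dist1 O u = l1 u.1 0 := by
        rw [hO, dist1, origin, hu2]; simp [l1_comm]
      have hcast : ((nbf u.1 : ℕ) : ℤ) = l1 u.1 0 := nb_cast u.1
      have hD : 0 ≤ dist1 u w := dist1_nonneg u w
      have hA : 0 ≤ dist1 O w := dist1_nonneg O w
      omega
    show ((max (nbf u.1) (r - nbf u.1) : ℕ) : ℝ≥0∞) ≤ radius u (hill ω u)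
    rcases le_total (nbf u.1) (r - nbf u.1) with h | h
    · rw [max_eq_right h]; exact h2
    · rw [max_eq_left h]; exact h1
  -- Step B: union bound and translation invariance
  have hB : μ {ω : Site d → Bool | (r : ℝ≥0∞) ≤ radius O (mountain ω O)} ≤
      ∑' b : Fin d → ℤ, μ (G ((tb b : ℕ) : ℝ≥0∞)) := by
    refine le_trans (measure_mono hincl) (le_trans (measure_iUnion_le _) ?_)
    refine le_of_eq (tsum_congr fun b => ?_)
    rw [← Measure.map_apply (measurable_shift _) (hGmeas _), hinv]
  -- Step C: counting
  set μhalf := μ (G (ENNReal.ofReal ((r:ℝ)/2))) with hmuhalf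
  have h3 : ENNReal.ofReal ((3:ℝ)^d) = (3:ℝ≥0∞)^d := by
    rw [ENNReal.ofReal_pow (by norm_num)]
    norm_num
  have hsplit : ∀ b : Fin d → ℤ, μ (G ((tb b : ℕ) : ℝ≥0∞)) ≤
      (if 2 * nbf b ≤ r then μhalf else 0) +
      (if r < 2 * nbf b then μ (G ((nbf b : ℕ) : ℝ≥0∞)) else 0) := by
    intro b
    by_cases h : 2 * nbf b ≤ r
    · rw [if_pos h, if_neg (by omega), add_zero]
      refine measure_mono (hGmono ?_)
      have h1 : (r:ℝ)/2 ≤ ((r - nbf b : ℕ) : ℝ) := by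
        rw [div_le_iff₀ (by norm_num : (0:ℝ) < 2)]
        calc (r:ℝ) ≤ ((2 * (r - nbf b) : ℕ) : ℝ) := Nat.cast_le.mpr (by omega)
          _ = ((r - nbf b : ℕ) : ℝ) * 2 := by push_cast; ring
      calc ENNReal.ofReal ((r:ℝ)/2) ≤ ENNReal.ofReal ((r - nbf b : ℕ):ℝ) :=
            ENNReal.ofReal_le_ofReal h1
        _ = ((r - nbf b : ℕ) : ℝ≥0∞) := ENNReal.ofReal_natCast _
        _ ≤ ((tb b : ℕ) : ℝ≥0∞) := Nat.cast_le.mpr (le_max_right _ _)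
    · rw [if_neg h, if_pos (by omega), zero_add]
      exact measure_mono (hGmono (Nat.cast_le.mpr (le_max_left _ _)))
  have hC : ∑' b : Fin d → ℤ, μ (G ((tb b : ℕ):ℝ≥0∞)) ≤
      (∑' b : Fin d → ℤ, if 2 * nbf b ≤ r then μhalf else 0) +
      ∑' b : Fin d → ℤ, (if r < 2 * nbf b then μ (G ((nbf b : ℕ):ℝ≥0∞)) else 0) := by
    rw [← ENNReal.tsum_add]
    exact ENNReal.tsum_le_tsum hsplit
  -- Sum 1
  have hSum1 : (∑' b : Fin d → ℤ, if 2 * nbf b ≤ r then μhalf else 0) ≤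
      ENNReal.ofReal ((3:ℝ)^d) * (r : ℝ≥0∞)^d * μhalf := by
    have hz : ∀ b ∉ box d r, (if 2 * nbf b ≤ r then μhalf else 0) = 0 := by
      intro b hb
      rw [if_neg]
      intro h
      have h2 : nbf b ≤ r := by omega
      exact hb (mem_box_of_nb h2)
    rw [tsum_eq_sum hz]
    have hle : (((2*r+1)^d : ℕ) : ℝ≥0∞) ≤ ((3:ℝ≥0∞) * r)^d := by
      rw [Nat.cast_pow]
      refine pow_le_pow_left₀ zero_le ?_ d
      calc ((2*r+1 : ℕ) : ℝ≥0∞) ≤ ((3*r : ℕ):ℝ≥0∞) := Nat.cast_le.mpr (by omega)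
        _ = 3 * r := by push_cast; ring
    calc ∑ b ∈ box d r, (if 2 * nbf b ≤ r then μhalf else 0)
        ≤ ∑ _b ∈ box d r, μhalf := Finset.sum_le_sum fun b _ => by by_cases h : 2 * nbf b ≤ r <;> simp [h]
      _ = (box d r).card • μhalf := Finset.sum_const _
      _ = (((2*r+1)^d : ℕ) : ℝ≥0∞) * μhalf := by rw [card_box, nsmul_eq_mul]
      _ ≤ ((3:ℝ≥0∞) * r)^d * μhalf := mul_le_mul' hle le_rfl
      _ = ENNReal.ofReal ((3:ℝ)^d) * (r:ℝ≥0∞)^d * μhalf := by rw [h3, mul_pow]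
  -- Sum 2
  have hSum2 : (∑' b : Fin d → ℤ, if r < 2 * nbf b then μ (G ((nbf b : ℕ):ℝ≥0∞)) else 0) ≤
      ENNReal.ofReal ((3:ℝ)^d) * ∑' s : ℕ,
        (if (r:ℝ)/2 ≤ (s:ℝ) then (s:ℝ≥0∞)^d * μ (G ((s : ℕ):ℝ≥0∞)) else 0) := by
    have hrepr : ∀ b : Fin d → ℤ,
        (if r < 2 * nbf b then μ (G ((nbf b : ℕ):ℝ≥0∞)) else 0) =
        ∑' s : ℕ, (if nbf b = s ∧ r < 2 * s then μ (G ((s : ℕ):ℝ≥0∞)) else 0) := by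
      intro b
      refine Eq.symm ?_
      rw [tsum_eq_single (nbf b) (fun s hs => if_neg (by rintro ⟨h1, -⟩; exact hs h1.symm))]
      by_cases h : r < 2 * nbf b
      · rw [if_pos ⟨rfl, h⟩, if_pos h]
      · rw [if_neg (fun hc => h hc.2), if_neg h]
    have hinner : ∀ s : ℕ,
        (∑' b : Fin d → ℤ, if nbf b = s ∧ r < 2 * s then μ (G ((s : ℕ):ℝ≥0∞)) else 0) ≤
        ENNReal.ofReal ((3:ℝ)^d) *
          (if (r:ℝ)/2 ≤ (s:ℝ) then (s:ℝ≥0∞)^d * μ (G ((s : ℕ):ℝ≥0∞)) else 0) := by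
      intro s
      by_cases hrs : r < 2 * s
      · have hcond : (r:ℝ)/2 ≤ (s:ℝ) := by
          rw [div_le_iff₀ (by norm_num : (0:ℝ) < 2)]
          calc (r:ℝ) ≤ ((2*s : ℕ):ℝ) := Nat.cast_le.mpr (by omega)
            _ = (s:ℝ) * 2 := by push_cast; ring
        rw [if_pos hcond]
        have hz : ∀ b ∉ box d s,
            (if nbf b = s ∧ r < 2*s then μ (G ((s : ℕ):ℝ≥0∞)) else 0) = 0 := by
          intro b hb
          rw [if_neg]
          rintro ⟨h1, -⟩
          exact hb (mem_box_of_nb (le_of_eq h1))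
        rw [tsum_eq_sum hz]
        have hle : (((2*s+1)^d : ℕ) : ℝ≥0∞) ≤ ((3:ℝ≥0∞) * s)^d := by
          rw [Nat.cast_pow]
          refine pow_le_pow_left₀ zero_le ?_ d
          calc ((2*s+1 : ℕ) : ℝ≥0∞) ≤ ((3*s : ℕ):ℝ≥0∞) := Nat.cast_le.mpr (by omega)
            _ = 3 * s := by push_cast; ring
        calc ∑ b ∈ box d s, (if nbf b = s ∧ r < 2*s then μ (G ((s : ℕ):ℝ≥0∞)) else 0)
            ≤ ∑ _b ∈ box d s, μ (G ((s : ℕ):ℝ≥0∞)) :=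
              Finset.sum_le_sum fun b _ => by
                by_cases hq : nbf b = s ∧ r < 2*s <;> simp [hq]
          _ = (box d s).card • μ (G ((s : ℕ):ℝ≥0∞)) := Finset.sum_const _
          _ = (((2*s+1)^d : ℕ) : ℝ≥0∞) * μ (G ((s : ℕ):ℝ≥0∞)) := by
              rw [card_box, nsmul_eq_mul]
          _ ≤ ((3:ℝ≥0∞) * s)^d * μ (G ((s : ℕ):ℝ≥0∞)) := mul_le_mul' hle le_rfl
          _ = ENNReal.ofReal ((3:ℝ)^d) * ((s:ℝ≥0∞)^d * μ (G ((s : ℕ):ℝ≥0∞))) := by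
              rw [h3, mul_pow, mul_assoc]
      · have hz : ∀ b : Fin d → ℤ,
            (if nbf b = s ∧ r < 2*s then μ (G ((s : ℕ):ℝ≥0∞)) else 0) = 0 :=
          fun b => if_neg fun hc => hrs hc.2
        simp only [hz, tsum_zero]
        exact zero_le
    calc (∑' b : Fin d → ℤ, if r < 2 * nbf b then μ (G ((nbf b : ℕ):ℝ≥0∞)) else 0)
        = ∑' b : Fin d → ℤ, ∑' s : ℕ,
            (if nbf b = s ∧ r < 2 * s then μ (G ((s : ℕ):ℝ≥0∞)) else 0) := tsum_congr hrepr
      _ = ∑' s : ℕ, ∑' b : Fin d → ℤ,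
            (if nbf b = s ∧ r < 2 * s then μ (G ((s : ℕ):ℝ≥0∞)) else 0) := ENNReal.tsum_comm
      _ ≤ ∑' s : ℕ, ENNReal.ofReal ((3:ℝ)^d) *
            (if (r:ℝ)/2 ≤ (s:ℝ) then (s:ℝ≥0∞)^d * μ (G ((s : ℕ):ℝ≥0∞)) else 0) :=
          ENNReal.tsum_le_tsum hinner
      _ = ENNReal.ofReal ((3:ℝ)^d) * ∑' s : ℕ,
            (if (r:ℝ)/2 ≤ (s:ℝ) then (s:ℝ≥0∞)^d * μ (G ((s : ℕ):ℝ≥0∞)) else 0) :=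
          ENNReal.tsum_mul_left
  exact le_trans (hB.trans hC) (add_le_add hSum1 hSum2)
end
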